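/- arXiv:1504.02250 — 2 statements merged into one kernel-verified Lean document; each statement's English description precedes it below -/
import Mathlib

section
/- Let G be a bipartite graph and E a set of edges. The following are equivalent: (i) some maximum independent set of G has an E-good accessibility ordering; (ii) G has a maximum matching M that is uniquely restricted and satisfies M ⊆ E; (iii) every maximum independent set of G has an E-good accessibility ordering. -/
variable {V : Type*}

/-- `M` is a matching in `G`: a set of edges of `G` that are pairwise disjoint. -/
def IsMatchingSet (G : SimpleGraph V) (M : Set (Sym2 V)) : Prop :=
  M ⊆ G.edgeSet ∧ ∀ e ∈ M, ∀ f ∈ M, e ≠ f → ∀ v : V, v ∈ e → v ∉ f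

/-- `V(M)`: the set of vertices covered by the matching `M`. -/
def matVerts (M : Set (Sym2 V)) : Set V := {v | ∃ e ∈ M, v ∈ e}

/-- `M` is a maximum matching in `G`. -/
def IsMaximumMatching (G : SimpleGraph V) (M : Set (Sym2 V)) : Prop :=
  IsMatchingSet G M ∧ ∀ M', IsMatchingSet G M' → M'.ncard ≤ M.ncard

/-- `M` is uniquely restricted: no matching distinct from `M` covers the same vertices. -/
def UniquelyRestricted (G : SimpleGraph V) (M : Set (Sym2 V)) : Prop :=
  ∀ M', IsMatchingSet G M' → matVerts M' = matVerts M → M' = M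

/-- `M` is a perfect matching of `G`. -/
def IsPerfectMatchingSet (G : SimpleGraph V) (M : Set (Sym2 V)) : Prop :=
  IsMatchingSet G M ∧ matVerts M = Set.univ

/-- `A, B` form a bipartition of `G`. -/
def IsBipartition (G : SimpleGraph V) (A B : Set V) : Prop :=
  Disjoint A B ∧ A ∪ B = Set.univ ∧
    ∀ ⦃u v : V⦄, G.Adj u v → (u ∈ A ∧ v ∈ B) ∨ (u ∈ B ∧ v ∈ A)

/-- `I` is an independent set in `G`. -/
def IsIndepSet (G : SimpleGraph V) (I : Set V) : Prop :=
  ∀ u ∈ I, ∀ v ∈ I, ¬ G.Adj u v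

/-- `I` is a maximum independent set in `G`. -/
def IsMaximumIndepSet (G : SimpleGraph V) (I : Set V) : Prop :=
  IsIndepSet G I ∧ ∀ J, IsIndepSet G J → J.ncard ≤ I.ncard

/-- The arcs of the digraph `D(M)`: edges not in `M` oriented from `A` to `B`,
edges of `M` oriented from `B` to `A`. -/
def DMarc (G : SimpleGraph V) (A B : Set V) (M : Set (Sym2 V)) (u v : V) : Prop :=
  G.Adj u v ∧ ((u ∈ A ∧ v ∈ B ∧ s(u, v) ∉ M) ∨ (u ∈ B ∧ v ∈ A ∧ s(u, v) ∈ M))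

/-- The digraph `D(M)` is acyclic. -/
def DMAcyclic (G : SimpleGraph V) (A B : Set V) (M : Set (Sym2 V)) : Prop :=
  ∀ v : V, ¬ Relation.TransGen (DMarc G A B M) v v

/-- `V⁺(M)`: vertices reachable in `D(M)` from an `A`-vertex uncovered by `M`. -/
def Vplus (G : SimpleGraph V) (A B : Set V) (M : Set (Sym2 V)) : Set V :=
  {v | ∃ a ∈ A, a ∉ matVerts M ∧ Relation.ReflTransGen (DMarc G A B M) a v}

/-- `V⁻(M)`: vertices from which a `B`-vertex uncovered by `M` is reachable in `D(M)`. -/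
def Vminus (G : SimpleGraph V) (A B : Set V) (M : Set (Sym2 V)) : Set V :=
  {v | ∃ b ∈ B, b ∉ matVerts M ∧ Relation.ReflTransGen (DMarc G A B M) v b}

/-- Given a linear ordering `l` of an independent set, `Mσ G l` is the set of edges
`y·p(y)` where `p(y)` is the first vertex of `l` adjacent to `y`. -/
def Msigma (G : SimpleGraph V) (l : List V) : Set (Sym2 V) :=
  {e | ∃ (i : Fin l.length) (y : V), e = s(y, l.get i) ∧ G.Adj (l.get i) y ∧
      ∀ j : Fin l.length, (j : ℕ) < (i : ℕ) → ¬ G.Adj (l.get j) y}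

/-- `l` is an accessibility ordering of `I`: it enumerates `I` without repetition
and `Mσ` is a matching. -/
def IsAccessibilityOrdering (G : SimpleGraph V) (I : Set V) (l : List V) : Prop :=
  l.Nodup ∧ {v | v ∈ l} = I ∧ IsMatchingSet G (Msigma G l)

/-- A partial accessibility ordering: an accessibility ordering of a subset of `I`. -/
def IsPartialAccessibilityOrdering (G : SimpleGraph V) (I : Set V) (l : List V) : Prop :=
  l.Nodup ∧ {v | v ∈ l} ⊆ I ∧ IsMatchingSet G (Msigma G l)

/-- `c` is an `M`-alternating cycle: of every two adjacent edges exactly one is in `M`. -/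
def IsAlternatingCycle (G : SimpleGraph V) (M : Set (Sym2 V)) {v : V} (c : G.Walk v v) : Prop :=
  c.IsCycle ∧ (c.edges ++ c.edges.take 1).Chain' (fun e f => e ∈ M ↔ f ∉ M)

/-- `M'` arises from `M` by a single edge exchange. -/
def EdgeExchange (G : SimpleGraph V) (A B : Set V) (M M' : Set (Sym2 V)) : Prop :=
  (∃ a a' b' : V, a ∈ A ∧ a ∉ matVerts M ∧ s(a', b') ∈ M ∧ G.Adj a b' ∧
      M' = (M \ {s(a', b')}) ∪ {s(a, b')}) ∨
  (∃ b a' b' : V, b ∈ B ∧ b ∉ matVerts M ∧ s(a', b') ∈ M ∧ G.Adj a' b ∧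
      M' = (M \ {s(a', b')}) ∪ {s(a', b)})

/-!
For an independent set `I`, every edge of a matching meets `Iᶜ`, so matchings have at most
`|Iᶜ|` edges, and a matching that matches every vertex outside `I` into `I` is maximum.

For an accessibility ordering `σ` of a maximum independent set `I`, every vertex outside `I`
has a first neighbour in `σ`, so `Mσ` is such a matching; a matching covering the same vertices
is forced to agree with `Mσ`, edge by edge along `σ`.

Conversely, in a bipartite graph König's theorem makes every maximum matching `M` match `Iᶜ`
into `I`. Put an arc `x → x'` on `I` when the `M`-partner of `x` is adjacent to `x'`. A cycle of
arcs yields a union of `M`-alternating cycles, and exchanging along it contradicts unique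
restriction; so the arcs are acyclic, and for any topological order `σ` of them, `Mσ = M`.
-/

/- Within a cycle of `r`, the nonempty sets in which every element has an `r`-predecessor are
closed under taking predecessors; on one of least size the predecessor map is a permutation. -/
lemma exists_bijOn_of_transGen_self {α : Type*} [Finite α] {r : α → α → Prop} {a : α}
    (ha : Relation.TransGen r a a) :
    ∃ C : Set α, ∃ π : α → α, C.Nonempty ∧ Set.BijOn π C C ∧ ∀ x ∈ C, r (π x) x := by
  have : Nonempty α := ⟨a⟩
  let 𝒞 : Set (Set α) := {C | C.Nonempty ∧ ∀ x ∈ C, ∃ c ∈ C, r c x}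
  have hcycle : {x | Relation.TransGen r x x} ∈ 𝒞 := by
    refine ⟨⟨a, ha⟩, fun x hx => ?_⟩
    obtain ⟨c, hxc, hcx⟩ := Relation.TransGen.tail'_iff.mp hx
    exact ⟨c, Relation.TransGen.head' hcx hxc, hcx⟩
  obtain ⟨C, ⟨hne, hpred⟩, hmin⟩ :=
    Set.exists_min_image 𝒞 Set.ncard (Set.toFinite 𝒞) ⟨_, hcycle⟩
  choose! π hπC hπr using hpred
  have himage : π '' C ∈ 𝒞 := by
    refine ⟨hne.image π, ?_⟩
    rintro _ ⟨x, hx, rfl⟩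
    exact ⟨π (π x), Set.mem_image_of_mem π (hπC x hx), hπr _ (hπC x hx)⟩
  have hsurj : Set.SurjOn π C C :=
    (Set.eq_of_subset_of_ncard_le (Set.mapsTo_iff_image_subset.mp hπC) (hmin _ himage)).symm.subset
  exact ⟨C, π, hne, ((Set.toFinite C).surjOn_iff_bijOn_of_mapsTo hπC).mp hsurj, hπr⟩

lemma exists_nodup_pairwise_of_acyclic {α : Type*} [Finite α] {r : α → α → Prop}
    (hr : ∀ a, ¬ Relation.TransGen r a a) (s : Finset α) :
    ∃ l : List α, l.Nodup ∧ {a | a ∈ l} = ↑s ∧ l.Pairwise fun a b => ¬ r b a := by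
  classical
  have : Std.Irrefl (Relation.TransGen r) := ⟨hr⟩
  have hwf := Finite.wellFounded_of_trans_of_irrefl (Relation.TransGen r)
  induction s using Finset.strongInduction with
  | H s ih =>
  rcases s.eq_empty_or_nonempty with rfl | hs
  · exact ⟨[], List.nodup_nil, by simp, List.Pairwise.nil⟩
  obtain ⟨m, hm, hmin⟩ := hwf.has_min s hs
  obtain ⟨l, hnd, hl, hpw⟩ := ih (s.erase m) (Finset.erase_ssubset hm)
  have hml : m ∉ l := fun h => Finset.notMem_erase m s (hl.subset h)
  refine ⟨m :: l, List.nodup_cons.mpr ⟨hml, hnd⟩, ?_, List.pairwise_cons.mpr ⟨?_, hpw⟩⟩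
  · rw [← Finset.insert_erase hm, Finset.coe_insert, ← hl]
    ext a
    exact List.mem_cons
  · exact fun b hb hbm => hmin b (Finset.mem_of_mem_erase (hl.subset hb)) (.single hbm)

def MatchesComplInto (I : Set V) (M : Set (Sym2 V)) : Prop :=
  ∀ y ∉ I, ∃ x ∈ I, s(y, x) ∈ M

abbrev neighbors (G : SimpleGraph V) (S : Set V) : Set V :=
  {x | ∃ y ∈ S, G.Adj y x}

section Matchings

variable {G : SimpleGraph V} {I : Set V} {M : Set (Sym2 V)}

lemma IsMatchingSet.eq_of_mem_of_mem (hM : IsMatchingSet G M) {e f : Sym2 V} {v : V}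
    (he : e ∈ M) (hf : f ∈ M) (hve : v ∈ e) (hvf : v ∈ f) : e = f := by
  by_contra hne
  exact hM.2 e he f hf hne v hve hvf

lemma IsMatchingSet.eq_of_subset {M' : Set (Sym2 V)} (hM' : IsMatchingSet G M') (hsub : M ⊆ M')
    (hV : matVerts M' ⊆ matVerts M) : M = M' := by
  refine hsub.antisymm fun e' he' => ?_
  induction e' using Sym2.ind with
  | _ u w =>
    obtain ⟨f, hf, huf⟩ := hV ⟨_, he', Sym2.mem_mk_left u w⟩
    rwa [hM'.eq_of_mem_of_mem he' (hsub hf) (Sym2.mem_mk_left u w) huf]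

lemma IsMatchingSet.exists_mem_compl (hM : IsMatchingSet G M) (hI : IsIndepSet G I)
    {e : Sym2 V} (he : e ∈ M) : ∃ v ∈ e, v ∉ I := by
  induction e using Sym2.ind with
  | _ u w =>
    by_contra! h
    exact hI u (h u (Sym2.mem_mk_left u w)) w (h w (Sym2.mem_mk_right u w)) (hM.1 he)

lemma IsMatchingSet.exists_injective_compl (hM : IsMatchingSet G M) (hI : IsIndepSet G I) :
    ∃ p : M → ↥Iᶜ, Function.Injective p ∧ ∀ e : M, (p e : V) ∈ (e : Sym2 V) := by
  choose p hpe hpI using fun e : M => hM.exists_mem_compl hI e.2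
  refine ⟨fun e => ⟨p e, hpI e⟩, fun e f hef => Subtype.ext ?_, hpe⟩
  simp only [Subtype.mk.injEq] at hef
  exact hM.eq_of_mem_of_mem e.2 f.2 (hpe e) (hef ▸ hpe f)

lemma IsMatchingSet.ncard_le_ncard_compl [Finite V] (hM : IsMatchingSet G M)
    (hI : IsIndepSet G I) : M.ncard ≤ Iᶜ.ncard := by
  obtain ⟨p, hp, -⟩ := hM.exists_injective_compl hI
  exact Nat.card_le_card_of_injective p hp

/- The injection `M → Iᶜ` picking an endpoint outside `I` is onto, so the other endpoint `x` of
the edge picked at `y` lies in `I`: otherwise `x` would be picked at the same edge. -/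
lemma IsMatchingSet.matchesComplInto_of_ncard_le [Finite V] (hM : IsMatchingSet G M)
    (hI : IsIndepSet G I) (hcard : Iᶜ.ncard ≤ M.ncard) : MatchesComplInto I M := by
  obtain ⟨p, hinj, hpe⟩ := hM.exists_injective_compl hI
  have hsurj := (hinj.bijective_of_nat_card_le hcard).2
  intro y hy
  obtain ⟨e, he⟩ := hsurj ⟨y, hy⟩
  obtain ⟨x, hex⟩ := Sym2.mem_iff_exists.mp (congrArg Subtype.val he ▸ hpe e)
  refine ⟨x, by_contra fun hx => ?_, hex ▸ e.2⟩
  obtain ⟨e', he'⟩ := hsurj ⟨x, hx⟩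
  have hxe' : x ∈ (e' : Sym2 V) := by simpa [he'] using hpe e'
  have hxe : x ∈ (e : Sym2 V) := hex ▸ Sym2.mem_mk_right _ _
  rw [Subtype.ext (hM.eq_of_mem_of_mem e'.2 e.2 hxe' hxe)] at he'
  have hadj : G.Adj y x := hM.1 (hex ▸ e.2)
  exact hadj.ne (congrArg Subtype.val (he.symm.trans he'))

lemma MatchesComplInto.ncard_compl_le [Finite V] (h : MatchesComplInto I M) :
    Iᶜ.ncard ≤ M.ncard := by
  choose! m hmI hmM using h
  refine Set.ncard_le_ncard_of_injOn (fun y => s(y, m y)) hmM fun y hy y' hy' hyy' => ?_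
  rcases Sym2.eq_iff.mp hyy' with ⟨h, -⟩ | ⟨h, -⟩
  · exact h
  · exact absurd (h ▸ hmI y' hy') hy

lemma MatchesComplInto.exists_eq_mk (h : MatchesComplInto I M) (hM : IsMatchingSet G M)
    (hI : IsIndepSet G I) {e : Sym2 V} (he : e ∈ M) : ∃ y ∉ I, ∃ x ∈ I, e = s(y, x) := by
  obtain ⟨y, hye, hy⟩ := hM.exists_mem_compl hI he
  obtain ⟨x, hx, hyx⟩ := h y hy
  exact ⟨y, hy, x, hx, hM.eq_of_mem_of_mem he hyx hye (Sym2.mem_mk_left y x)⟩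

lemma MatchesComplInto.isMaximumMatching [Finite V] (h : MatchesComplInto I M)
    (hM : IsMatchingSet G M) (hI : IsIndepSet G I) : IsMaximumMatching G M :=
  ⟨hM, fun _ hM' => (hM'.ncard_le_ncard_compl hI).trans h.ncard_compl_le⟩

end Matchings

section IndependentSets

variable {G : SimpleGraph V} {I : Set V}

lemma exists_isMaximumIndepSet [Finite V] (G : SimpleGraph V) : ∃ I, IsMaximumIndepSet G I := by
  obtain ⟨I, hI, hmax⟩ := Set.exists_max_image {J | IsIndepSet G J} Set.ncard (Set.toFinite _)
    ⟨∅, fun _ hu => hu.elim⟩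
  exact ⟨I, hI, hmax⟩

lemma IsMaximumIndepSet.exists_adj_of_notMem [Finite V] (hI : IsMaximumIndepSet G I) {y : V}
    (hy : y ∉ I) : ∃ x ∈ I, G.Adj x y := by
  by_contra! h
  have hind : IsIndepSet G (insert y I) := by
    rintro u (rfl | hu) v (rfl | hv) huv
    · exact G.irrefl huv
    · exact h v hv huv.symm
    · exact h u hu huv
    · exact hI.1 u hu v hv huv
  have := hI.2 _ hind
  rw [Set.ncard_insert_of_notMem hy] at this
  omega

/- Otherwise `(I \ N(S)) ∪ S` would be a larger independent set. -/
lemma IsMaximumIndepSet.ncard_le_ncard_inter_neighbors [Finite V] (hI : IsMaximumIndepSet G I)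
    {S : Set V} (hS : IsIndepSet G S) (hSI : Disjoint S I) :
    S.ncard ≤ (I ∩ {x | ∃ y ∈ S, G.Adj y x}).ncard := by
  set N := I ∩ {x | ∃ y ∈ S, G.Adj y x}
  have hNI : N ⊆ I := Set.inter_subset_left
  have hind : IsIndepSet G ((I \ N) ∪ S) := by
    rintro u (hu | hu) v (hv | hv) huv
    · exact hI.1 u hu.1 v hv.1 huv
    · exact hu.2 ⟨hu.1, v, hv, huv.symm⟩
    · exact hv.2 ⟨hv.1, u, hu, huv⟩
    · exact hS u hu v hv huv
  have hcard := hI.2 _ hind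
  rw [Set.ncard_union_eq (hSI.symm.mono_left Set.sdiff_subset), Set.ncard_sdiff hNI] at hcard
  have := Set.ncard_le_ncard hNI
  omega

end IndependentSets

section Bipartite

variable {G : SimpleGraph V} {A B : Set V}

lemma IsBipartition.symm (h : IsBipartition G A B) : IsBipartition G B A :=
  ⟨h.1.symm, Set.union_comm A B ▸ h.2.1, fun _ _ huv => (h.2.2 huv).symm⟩

lemma IsBipartition.mem_right_of_adj (h : IsBipartition G A B) {u v : V} (hu : u ∈ A)
    (huv : G.Adj u v) : v ∈ B :=
  (h.2.2 huv).elim And.right fun h' => absurd h'.1 (h.1.notMem_of_mem_left hu)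

lemma IsBipartition.isIndepSet_of_subset_left (h : IsBipartition G A B) {S : Set V}
    (hS : S ⊆ A) : IsIndepSet G S :=
  fun _ hu _ hv huv => h.1.notMem_of_mem_left (hS hv) (h.mem_right_of_adj (hS hu) huv)

lemma IsBipartition.ncard_le_ncard_inter_neighbors [Finite V] (h : IsBipartition G A B)
    {I : Set V} (hI : IsMaximumIndepSet G I) {S : Set V} (hSI : Disjoint S I) :
    S.ncard ≤ (I ∩ {x | ∃ y ∈ S, G.Adj y x}).ncard := by
  have hdisj : Disjoint (I ∩ {x | ∃ y ∈ S ∩ A, G.Adj y x}) (I ∩ {x | ∃ y ∈ S ∩ B, G.Adj y x}) :=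
    Set.disjoint_left.mpr fun x ⟨_, y, hy, hyx⟩ ⟨_, y', hy', hy'x⟩ =>
      h.1.notMem_of_mem_left (h.symm.mem_right_of_adj hy'.2 hy'x) (h.mem_right_of_adj hy.2 hyx)
  calc S.ncard = (S ∩ A).ncard + (S ∩ B).ncard := by
        rw [← Set.ncard_union_eq (h.1.mono Set.inter_subset_right Set.inter_subset_right),
          ← Set.inter_union_distrib_left, h.2.1, Set.inter_univ]
    _ ≤ (I ∩ {x | ∃ y ∈ S ∩ A, G.Adj y x}).ncard + (I ∩ {x | ∃ y ∈ S ∩ B, G.Adj y x}).ncard :=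
        add_le_add
          (hI.ncard_le_ncard_inter_neighbors (h.isIndepSet_of_subset_left Set.inter_subset_right)
            (hSI.mono_left Set.inter_subset_left))
          (hI.ncard_le_ncard_inter_neighbors
            (h.symm.isIndepSet_of_subset_left Set.inter_subset_right)
            (hSI.mono_left Set.inter_subset_left))
    _ = ((I ∩ {x | ∃ y ∈ S ∩ A, G.Adj y x}) ∪ (I ∩ {x | ∃ y ∈ S ∩ B, G.Adj y x})).ncard :=
        (Set.ncard_union_eq hdisj).symm
    _ ≤ (I ∩ {x | ∃ y ∈ S, G.Adj y x}).ncard := by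
        refine Set.ncard_le_ncard (Set.union_subset ?_ ?_) <;>
          exact fun x ⟨hx, y, hy, hyx⟩ => ⟨hx, y, hy.1, hyx⟩

/- König's theorem, via Hall's theorem. -/
lemma IsBipartition.exists_matchesComplInto [Fintype V] (h : IsBipartition G A B) {I : Set V}
    (hI : IsMaximumIndepSet G I) : ∃ M, IsMatchingSet G M ∧ MatchesComplInto I M := by
  classical
  obtain ⟨f, hfinj, hf⟩ := (Fintype.all_card_le_filter_rel_iff_exists_injective
    (fun (y : ↥Iᶜ) x => x ∈ I ∧ G.Adj y x)).mp fun T => by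
      have := h.ncard_le_ncard_inter_neighbors hI (S := Subtype.val '' (T : Set ↥Iᶜ))
        (Set.disjoint_left.mpr fun _ ⟨y, _, hy⟩ => hy ▸ y.2)
      rw [Subtype.val_injective.injOn.ncard_image, Set.ncard_coe_finset] at this
      refine this.trans_eq ?_
      rw [← Set.ncard_coe_finset]
      congr 1
      ext x
      simp only [Set.mem_image, SetLike.mem_coe, Subtype.exists, Set.mem_compl_iff,
        exists_and_right, exists_eq_right, Set.mem_inter_iff, Set.mem_ofPred_eq,
        Finset.coe_filter, Finset.mem_univ, true_and]
      exact ⟨fun ⟨hx, y, hy, hyx⟩ => ⟨y, hy, hx, hyx⟩, fun ⟨y, hy, hx, hyx⟩ => ⟨hx, y, hy, hyx⟩⟩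
  refine ⟨Set.range fun y : ↥Iᶜ => s(y.1, f y), ⟨?_, ?_⟩,
    fun y hy => ⟨f ⟨y, hy⟩, (hf _).1, ⟨y, hy⟩, rfl⟩⟩
  · rintro _ ⟨y, rfl⟩
    exact (hf y).2
  · rintro _ ⟨y, rfl⟩ _ ⟨y', rfl⟩ hne v hv hv'
    rcases Sym2.mem_iff.mp hv with rfl | rfl <;> rcases Sym2.mem_iff.mp hv' with h' | h'
    · exact hne (by rw [Subtype.ext h'])
    · exact y.2 (h' ▸ (hf y').1)
    · exact y'.2 (h'.symm ▸ (hf y).1)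
    · exact hne (by rw [hfinj h'])

lemma IsMaximumMatching.matchesComplInto [Fintype V] (h : IsBipartition G A B) {I : Set V}
    (hI : IsMaximumIndepSet G I) {M : Set (Sym2 V)} (hM : IsMaximumMatching G M) :
    MatchesComplInto I M := by
  obtain ⟨M₀, hM₀, hcov⟩ := h.exists_matchesComplInto hI
  exact hM.1.matchesComplInto_of_ncard_le hI.1 (hcov.ncard_compl_le.trans (hM.2 M₀ hM₀))

end Bipartite

section Orderings

variable {G : SimpleGraph V} {I : Set V} {M : Set (Sym2 V)} {l : List V}

lemma exists_mk_mem_msigma {k : Fin l.length} {y : V} (hk : G.Adj (l.get k) y) :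
    ∃ i : Fin l.length, s(y, l.get i) ∈ Msigma G l := by
  obtain ⟨i, hi, hmin⟩ := WellFounded.has_min wellFounded_lt {i | G.Adj (l.get i) y} ⟨k, hk⟩
  exact ⟨i, i, y, rfl, hi, fun j hj hadj => hmin j hadj hj⟩

lemma matchesComplInto_msigma [Finite V] (hI : IsMaximumIndepSet G I) (hl : {v | v ∈ l} = I) :
    MatchesComplInto I (Msigma G l) := by
  intro y hy
  obtain ⟨x, hx, hxy⟩ := hI.exists_adj_of_notMem hy
  obtain ⟨k, rfl⟩ := List.mem_iff_get.mp (show x ∈ l from hl.symm.subset hx)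
  obtain ⟨i, hi⟩ := exists_mk_mem_msigma hxy
  exact ⟨l.get i, hl.subset (l.get_mem i), hi⟩

/- By induction along `l`, every edge `y·x_i` of `Mσ` lies in `M'`: the `M'`-partner `u` of
`x_i` is matched in `Mσ` to some `x_j` with `j ≤ i`, and `j < i` would put `u·x_j` into `M'`. -/
lemma uniquelyRestricted_msigma (hl : IsIndepSet G {v | v ∈ l})
    (hM : IsMatchingSet G (Msigma G l)) : UniquelyRestricted G (Msigma G l) := by
  intro M' hM' hV
  suffices h : ∀ (i : Fin l.length) (y : V), s(y, l.get i) ∈ Msigma G l → s(y, l.get i) ∈ M' by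
    refine (hM'.eq_of_subset ?_ hV.le).symm
    rintro _ ⟨i, y, rfl, hi⟩
    exact h i y ⟨i, y, rfl, hi⟩
  intro i
  induction i using WellFoundedLT.induction with
  | _ i ih =>
  intro y he
  obtain ⟨e', he', hie'⟩ : l.get i ∈ matVerts M' := hV ▸ ⟨_, he, Sym2.mem_mk_right _ _⟩
  obtain ⟨u, rfl⟩ := Sym2.mem_iff_exists.mp hie'
  have hu : u ∉ l := fun hu => hl _ (l.get_mem i) u hu (hM'.1 he')
  obtain ⟨f, hf, huf⟩ : u ∈ matVerts (Msigma G l) := hV ▸ ⟨_, he', Sym2.mem_mk_right _ _⟩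
  obtain ⟨j, z, rfl, -, hj⟩ := id hf
  obtain rfl : z = u := (Sym2.mem_iff.mp huf).elim Eq.symm fun h => absurd (h ▸ l.get_mem j) hu
  have hji : j ≤ i := not_lt.mp fun hij => hj i hij (hM'.1 he')
  have hif : l.get i ∈ s(z, l.get j) := by
    rcases hji.lt_or_eq with hlt | rfl
    · rw [hM'.eq_of_mem_of_mem (ih j hlt z hf) he' (Sym2.mem_mk_left _ _) (Sym2.mem_mk_right _ _)]
      exact Sym2.mem_mk_left _ _
    · exact Sym2.mem_mk_right _ _
  have hze : z ∈ s(y, l.get i) :=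
    hM.eq_of_mem_of_mem hf he hif (Sym2.mem_mk_right _ _) ▸ Sym2.mem_mk_left _ _
  have hiz : l.get i ≠ z := fun h => hu (h ▸ l.get_mem i)
  rwa [Sym2.eq_of_ne_mem hiz (Sym2.mem_mk_right _ _) hze (Sym2.mem_mk_left _ _)
    (Sym2.mem_mk_right _ _)]

lemma IsAccessibilityOrdering.isMaximumMatching_and_uniquelyRestricted [Finite V]
    (hI : IsMaximumIndepSet G I) (hl : IsAccessibilityOrdering G I l) :
    IsMaximumMatching G (Msigma G l) ∧ UniquelyRestricted G (Msigma G l) := by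
  obtain ⟨-, hlI, hM⟩ := hl
  exact ⟨(matchesComplInto_msigma hI hlI).isMaximumMatching hM hI.1,
    uniquelyRestricted_msigma (hlI ▸ hI.1) hM⟩

end Orderings

section CycleExchange

variable {G : SimpleGraph V} {M : Set (Sym2 V)} {C : Set V} {π y : V → V}

/-- When `π` permutes `C`, this is the exchange along a union of `M`-alternating cycles. -/
def cycleExchange (M : Set (Sym2 V)) (C : Set V) (π y : V → V) : Set (Sym2 V) :=
  (M \ (fun x => s(y x, π x)) '' C) ∪ (fun x => s(y x, x)) '' C

lemma isMatchingSet_cycleExchange (hM : IsMatchingSet G M) (hC : IsIndepSet G C)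
    (hπ : Set.BijOn π C C) (hy : ∀ x ∈ C, s(y x, π x) ∈ M ∧ G.Adj (y x) x) :
    IsMatchingSet G (cycleExchange M C π y) := by
  have hyC : ∀ x ∈ C, y x ∉ C := fun x hx hyx => hC _ hyx _ hx (hy x hx).2
  have hkept : ∀ e ∈ M \ (fun x => s(y x, π x)) '' C, ∀ x ∈ C, ∀ v ∈ e, v ∉ s(y x, x) := by
    rintro e ⟨he, hrem⟩ x hx v hve hv
    rcases Sym2.mem_iff.mp hv with rfl | rfl
    · exact hrem ⟨x, hx, hM.eq_of_mem_of_mem (hy x hx).1 he (Sym2.mem_mk_left _ _) hve⟩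
    · obtain ⟨x', hx', rfl⟩ := hπ.surjOn hx
      exact hrem ⟨x', hx', hM.eq_of_mem_of_mem (hy x' hx').1 he (Sym2.mem_mk_right _ _) hve⟩
  refine ⟨?_, ?_⟩
  · rintro e (he | ⟨x, hx, rfl⟩)
    exacts [hM.1 he.1, (hy x hx).2]
  rintro e (he | ⟨a, ha, rfl⟩) f (hf | ⟨b, hb, rfl⟩) hne v hve hvf
  · exact hM.2 e he.1 f hf.1 hne v hve hvf
  · exact hkept e he b hb v hve hvf
  · exact hkept f hf a ha v hvf hve
  rcases Sym2.mem_iff.mp hve with rfl | rfl <;> rcases Sym2.mem_iff.mp hvf with h | rfl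
  · have hab := hM.eq_of_mem_of_mem (hy a ha).1 (hy b hb).1 (Sym2.mem_mk_left _ _)
      (h ▸ Sym2.mem_mk_left _ _)
    rcases Sym2.eq_iff.mp hab with ⟨-, hπab⟩ | ⟨hyab, -⟩
    · exact hne (by rw [hπ.injOn ha hb hπab])
    · exact hyC a ha (hyab ▸ hπ.mapsTo hb)
  · exact hyC a ha hb
  · exact hyC b hb (h ▸ ha)
  · exact hne rfl

lemma matVerts_cycleExchange (hπ : Set.BijOn π C C)
    (hy : ∀ x ∈ C, s(y x, π x) ∈ M) : matVerts (cycleExchange M C π y) = matVerts M := by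
  ext v
  constructor
  · rintro ⟨e, he | ⟨x, hx, rfl⟩, hve⟩
    · exact ⟨e, he.1, hve⟩
    rcases Sym2.mem_iff.mp hve with rfl | rfl
    · exact ⟨_, hy x hx, Sym2.mem_mk_left _ _⟩
    · obtain ⟨x', hx', rfl⟩ := hπ.surjOn hx
      exact ⟨_, hy x' hx', Sym2.mem_mk_right _ _⟩
  · rintro ⟨e, he, hve⟩
    by_cases hrem : e ∈ (fun x => s(y x, π x)) '' C
    · obtain ⟨x, hx, rfl⟩ := hrem
      rcases Sym2.mem_iff.mp hve with rfl | rfl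
      · exact ⟨_, Or.inr ⟨x, hx, rfl⟩, Sym2.mem_mk_left _ _⟩
      · exact ⟨_, Or.inr ⟨π x, hπ.mapsTo hx, rfl⟩, Sym2.mem_mk_right _ _⟩
    · exact ⟨e, Or.inl ⟨he, hrem⟩, hve⟩

lemma not_uniquelyRestricted_of_bijOn (hM : IsMatchingSet G M) (hC : IsIndepSet G C)
    (hπ : Set.BijOn π C C) (hy : ∀ x ∈ C, s(y x, π x) ∈ M ∧ G.Adj (y x) x) {x : V} (hx : x ∈ C)
    (hπx : π x ≠ x) : ¬ UniquelyRestricted G M := by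
  intro hUR
  have hrot := hUR _ (isMatchingSet_cycleExchange hM hC hπ hy)
    (matVerts_cycleExchange hπ fun x hx => (hy x hx).1)
  have hxM : s(y x, x) ∈ M := hrot ▸ Or.inr ⟨x, hx, rfl⟩
  rcases Sym2.eq_iff.mp (hM.eq_of_mem_of_mem hxM (hy x hx).1 (Sym2.mem_mk_left _ _)
    (Sym2.mem_mk_left _ _)) with ⟨-, h⟩ | ⟨h, -⟩
  · exact hπx h.symm
  · exact hC _ (h ▸ hπ.mapsTo hx) _ hx (hy x hx).2

end CycleExchange

/-- `x'` has to come after `x` in any ordering `σ` of `I` with `Mσ = M`. -/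
def AlternatingArc (G : SimpleGraph V) (I : Set V) (M : Set (Sym2 V)) (x x' : V) : Prop :=
  x ∈ I ∧ x' ∈ I ∧ x ≠ x' ∧ ∃ y, s(y, x) ∈ M ∧ G.Adj y x'

section Backward

variable {G : SimpleGraph V} {I : Set V} {M : Set (Sym2 V)}

lemma UniquelyRestricted.not_transGen_alternatingArc [Finite V] (hUR : UniquelyRestricted G M)
    (hM : IsMatchingSet G M) (hI : IsIndepSet G I) (v : V) :
    ¬ Relation.TransGen (AlternatingArc G I M) v v := by
  intro hv
  have : Nonempty V := ⟨v⟩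
  obtain ⟨C, π, ⟨x, hx⟩, hπ, harc⟩ := exists_bijOn_of_transGen_self hv
  choose! y hy using fun x hx => (harc x hx).2.2.2
  have hC : IsIndepSet G C := fun u hu w hw => hI u (harc u hu).2.1 w (harc w hw).2.1
  exact not_uniquelyRestricted_of_bijOn hM hC hπ hy hx (harc x hx).2.2.1 hUR

lemma msigma_eq_of_pairwise {l : List V} (hI : IsIndepSet G I) (hM : IsMatchingSet G M)
    (hcov : MatchesComplInto I M) (hl : {v | v ∈ l} = I)
    (hpw : l.Pairwise fun a b => ¬ AlternatingArc G I M b a) : Msigma G l = M := by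
  have hsub : Msigma G l ⊆ M := by
    rintro _ ⟨i, y, rfl, hiy, hi⟩
    have hy : y ∉ I := fun hy => hI _ (hl.subset (l.get_mem i)) y hy hiy
    obtain ⟨x, hx, hyx⟩ := hcov y hy
    obtain ⟨k, rfl⟩ := List.mem_iff_get.mp (show x ∈ l from hl.symm.subset hx)
    by_cases hki : l.get k = l.get i
    · rwa [← hki]
    rcases lt_or_gt_of_ne fun h : k = i => hki (h ▸ rfl) with hlt | hgt
    · exact absurd (hM.1 hyx).symm (hi k hlt)
    · exact absurd ⟨hx, hl.subset (l.get_mem i), hki, y, hyx, hiy.symm⟩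
        (List.pairwise_iff_get.mp hpw i k hgt)
  refine hsub.antisymm fun e he => ?_
  obtain ⟨y, -, x, hx, rfl⟩ := hcov.exists_eq_mk hM hI he
  obtain ⟨k, rfl⟩ := List.mem_iff_get.mp (show x ∈ l from hl.symm.subset hx)
  obtain ⟨i, hi⟩ := exists_mk_mem_msigma (hM.1 he).symm
  rwa [hM.eq_of_mem_of_mem he (hsub hi) (Sym2.mem_mk_left _ _) (Sym2.mem_mk_left _ _)]

lemma exists_isAccessibilityOrdering_msigma_eq [Fintype V] {A B : Set V}
    (hbip : IsBipartition G A B) (hM : IsMaximumMatching G M) (hUR : UniquelyRestricted G M)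
    (hI : IsMaximumIndepSet G I) : ∃ l, IsAccessibilityOrdering G I l ∧ Msigma G l = M := by
  classical
  obtain ⟨l, hnd, hl, hpw⟩ :=
    exists_nodup_pairwise_of_acyclic (hUR.not_transGen_alternatingArc hM.1 hI.1) I.toFinset
  rw [Set.coe_toFinset] at hl
  have hMs := msigma_eq_of_pairwise hI.1 hM.1 (hM.matchesComplInto hbip hI) hl hpw
  exact ⟨l, ⟨hnd, hl, hMs ▸ hM.1⟩, hMs⟩

end Backward

/-- Equivalence of (i) some maximum independent set has an `E`-good accessibility
ordering, (ii) `G` has a uniquely restricted maximum matching inside `E`, and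
(iii) every maximum independent set has an `E`-good accessibility ordering. -/
theorem stmt5 [Fintype V] (G : SimpleGraph V) (A B : Set V) (hbip : IsBipartition G A B)
    (E : Set (Sym2 V)) :
    ((∃ I, IsMaximumIndepSet G I ∧ ∃ l, IsAccessibilityOrdering G I l ∧ Msigma G l ⊆ E) ↔
      (∃ M, IsMaximumMatching G M ∧ UniquelyRestricted G M ∧ M ⊆ E)) ∧
    ((∃ M, IsMaximumMatching G M ∧ UniquelyRestricted G M ∧ M ⊆ E) ↔
      (∀ I, IsMaximumIndepSet G I → ∃ l, IsAccessibilityOrdering G I l ∧ Msigma G l ⊆ E)) := by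
  obtain ⟨I₀, hI₀⟩ := exists_isMaximumIndepSet G
  refine ⟨⟨?_, ?_⟩, ⟨?_, fun h => ?_⟩⟩
  · rintro ⟨I, hI, l, hl, hE⟩
    obtain ⟨hmax, hUR⟩ := hl.isMaximumMatching_and_uniquelyRestricted hI
    exact ⟨Msigma G l, hmax, hUR, hE⟩
  · rintro ⟨M, hM, hUR, hE⟩
    obtain ⟨l, hl, rfl⟩ := exists_isAccessibilityOrdering_msigma_eq hbip hM hUR hI₀
    exact ⟨I₀, hI₀, l, hl, hE⟩
  · rintro ⟨M, hM, hUR, hE⟩ I hI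
    obtain ⟨l, hl, rfl⟩ := exists_isAccessibilityOrdering_msigma_eq hbip hM hUR hI
    exact ⟨l, hl, hE⟩
  · obtain ⟨l, hl, hE⟩ := h I₀ hI₀
    obtain ⟨hmax, hUR⟩ := hl.isMaximumMatching_and_uniquelyRestricted hI₀
    exact ⟨Msigma G l, hmax, hUR, hE⟩
end

section
/- Let M be a matching in a bipartite graph G with partite sets A and B, and let D(M) be the digraph on V(G) obtained by orienting each edge of G not in M from A to B, and each edge of M from B to A. Then M is a maximum matching if and only if D(M) contains no directed path from a vertex of A not covered by M to a vertex of B not covered by M. -/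
variable {V : Type*}

/-!
Arcs of `D(M)` alternate between non-matching edges (out of `A`) and matching edges (out of `B`),
so a path of `D(M)` from an uncovered `a ∈ A` to an uncovered `b ∈ B` is `M`-augmenting. Taking
it simple, we augment two edges at a time: replacing the matching edge `b₁a₁` by the first edge
`ab₁` keeps `|M|`, uncovers `a₁`, and does not change the arcs of the rest of the path, which
avoids `b₁`; the last edge is then simply added to the matching.

Conversely, let `R` be the set of vertices reachable in `D(M)` from uncovered vertices of `A`.
Then `C = (A \ R) ∪ (B ∩ R)` is a vertex cover (Kőnig). If no uncovered vertex of `B` lies in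
`R`, every vertex of `C` is covered by `M`, and each matching edge `pq` has exactly one end in
`C`, since its only arc `q → p` gives `p ∈ R ↔ q ∈ R`. Hence every matching has at most
`|C| ≤ |M|` edges.
-/

open SimpleGraph

theorem Set.ncard_le_ncard_of_forall_subsingleton {α β : Type*} {s : Set α} {t : Set β}
    (r : α → β → Prop) (ht : t.Finite) (hs : ∀ a ∈ s, ∃ b ∈ t, r a b)
    (hr : ∀ b ∈ t, {a ∈ s | r a b}.Subsingleton) : s.ncard ≤ t.ncard := by
  obtain rfl | ⟨a₀, ha₀⟩ := s.eq_empty_or_nonempty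
  · simp
  have : Nonempty β := ⟨(hs a₀ ha₀).choose⟩
  choose! f hft hf using hs
  exact Set.ncard_le_ncard_of_injOn f hft
    (fun a ha a' ha' h => hr (f a) (hft a ha) ⟨ha, hf a ha⟩ ⟨ha', h ▸ hf a' ha'⟩) ht

theorem SimpleGraph.exists_isPath_of_reflTransGen {G : SimpleGraph V} {r : V → V → Prop}
    (hr : ∀ x y, r x y → G.Adj x y) {a b : V} (hab : Relation.ReflTransGen r a b) :
    ∃ p : G.Walk a b, p.IsPath ∧ ∀ d ∈ p.darts, r d.fst d.snd := by
  classical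
  have walk : ∃ p : G.Walk a b, ∀ d ∈ p.darts, r d.fst d.snd := by
    induction hab using Relation.ReflTransGen.head_induction_on with
    | refl => exact ⟨.nil, by simp⟩
    | head hac _ ih =>
      obtain ⟨p, hp⟩ := ih
      exact ⟨.cons (hr _ _ hac) p, by simpa [hac] using hp⟩
  obtain ⟨p, hp⟩ := walk
  exact ⟨p.toPath, p.toPath.2, fun d hd => hp d (p.darts_toPath_subset_darts hd)⟩

section Matching

variable {G : SimpleGraph V} {M N : Set (Sym2 V)} {u v : V}

theorem mem_matVerts_insert {e : Sym2 V} : v ∈ matVerts (insert e M) ↔ v ∈ e ∨ v ∈ matVerts M := by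
  simp [matVerts]

theorem matVerts_mono (h : N ⊆ M) : matVerts N ⊆ matVerts M :=
  fun _ ⟨e, he, hv⟩ => ⟨e, h he, hv⟩

namespace IsMatchingSet

theorem eq_of_mem (hM : IsMatchingSet G M) {e f : Sym2 V} (he : e ∈ M) (hf : f ∈ M)
    (hve : v ∈ e) (hvf : v ∈ f) : e = f :=
  by_contra fun h => hM.2 e he f hf h v hve hvf

theorem mono (hM : IsMatchingSet G M) (h : N ⊆ M) : IsMatchingSet G N :=
  ⟨h.trans hM.1, fun e he f hf => hM.2 e (h he) f (h hf)⟩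

theorem insert_mk (hM : IsMatchingSet G M) (huv : G.Adj u v) (hu : u ∉ matVerts M)
    (hv : v ∉ matVerts M) : IsMatchingSet G (insert s(u, v) M) := by
  have fresh : ∀ e ∈ M, ∀ w ∈ s(u, v), w ∉ e := by
    rintro e he w hw hwe
    rcases Sym2.mem_iff.mp hw with rfl | rfl
    exacts [hu ⟨e, he, hwe⟩, hv ⟨e, he, hwe⟩]
  refine ⟨Set.insert_subset huv hM.1, ?_⟩
  rintro e (rfl | he) f (rfl | hf) hef w hwe hwf
  · exact hef rfl
  · exact fresh f hf w hwe hwf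
  · exact fresh e he w hwf hwe
  · exact hM.2 e he f hf hef w hwe hwf

theorem notMem_matVerts_sdiff (hM : IsMatchingSet G M) (huv : s(u, v) ∈ M) :
    u ∉ matVerts (M \ {s(u, v)}) :=
  fun ⟨_, ⟨he, hne⟩, hue⟩ => hne (hM.eq_of_mem he huv hue (Sym2.mem_mk_left u v))

theorem ncard_le_of_isVertexCover [Finite V] (hM : IsMatchingSet G M) {C : Set V}
    (hC : G.IsVertexCover C) : M.ncard ≤ C.ncard := by
  refine Set.ncard_le_ncard_of_forall_subsingleton (fun e v => v ∈ e) C.toFinite ?_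
    fun v _ e ⟨he, hve⟩ f ⟨hf, hvf⟩ => hM.eq_of_mem he hf hve hvf
  intro e he
  induction e using Sym2.ind with
  | _ x y =>
    rcases hC (hM.1 he) with hx | hy
    exacts [⟨x, hx, Sym2.mem_mk_left x y⟩, ⟨y, hy, Sym2.mem_mk_right x y⟩]

theorem exchange [Finite V] {a b a' : V} (hM : IsMatchingSet G M) (hba' : s(b, a') ∈ M)
    (hab : G.Adj a b) (ha : a ∉ matVerts M) :
    IsMatchingSet G (insert s(a, b) (M \ {s(b, a')})) ∧
      (insert s(a, b) (M \ {s(b, a')})).ncard = M.ncard ∧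
      a' ∉ matVerts (insert s(a, b) (M \ {s(b, a')})) := by
  have ha' : a' ∉ matVerts (M \ {s(b, a')}) := by
    rw [Sym2.eq_swap]; exact hM.notMem_matVerts_sdiff (Sym2.eq_swap ▸ hba')
  have hb : b ∉ matVerts (M \ {s(b, a')}) := hM.notMem_matVerts_sdiff hba'
  have ha_diff : a ∉ matVerts (M \ {s(b, a')}) := fun h => ha (matVerts_mono Set.sdiff_subset h)
  refine ⟨(hM.mono Set.sdiff_subset).insert_mk hab ha_diff hb, ?_, ?_⟩
  · rw [Set.ncard_insert_of_notMem (fun h => ha_diff ⟨_, h, Sym2.mem_mk_left a b⟩),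
      Set.ncard_sdiff_singleton_add_one hba']
  · rw [mem_matVerts_insert, Sym2.mem_iff, not_or, not_or]
    refine ⟨⟨?_, (hM.1 hba').ne.symm⟩, ha'⟩
    rintro rfl
    exact ha ⟨_, hba', Sym2.mem_mk_right b a'⟩

end IsMatchingSet

end Matching

section Augmentation

variable {G : SimpleGraph V} {A B : Set V} {M M' : Set (Sym2 V)} {u v : V}

theorem DMarc.of_left_mem_A (hAB : Disjoint A B) (h : DMarc G A B M u v) (hu : u ∈ A) :
    v ∈ B ∧ s(u, v) ∉ M := by
  rcases h.2 with ⟨-, hv, huv⟩ | ⟨hu', -, -⟩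
  exacts [⟨hv, huv⟩, (Set.disjoint_left.mp hAB hu hu').elim]

theorem DMarc.of_left_mem_B (hAB : Disjoint A B) (h : DMarc G A B M u v) (hu : u ∈ B) :
    v ∈ A ∧ s(u, v) ∈ M := by
  rcases h.2 with ⟨hu', -, -⟩ | ⟨-, hv, huv⟩
  exacts [(Set.disjoint_left.mp hAB hu' hu).elim, ⟨hv, huv⟩]

theorem dMarc_iff_of_mem_iff (h : s(u, v) ∈ M ↔ s(u, v) ∈ M') :
    DMarc G A B M u v ↔ DMarc G A B M' u v := by
  rw [DMarc, DMarc, h]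

theorem mem_exchange_iff {a b a' : V} {e : Sym2 V} (hb : b ∉ e) :
    e ∈ insert s(a, b) (M \ {s(b, a')}) ↔ e ∈ M := by
  have hab : e ≠ s(a, b) := fun h => hb (h ▸ Sym2.mem_mk_right a b)
  have hba' : e ≠ s(b, a') := fun h => hb (h ▸ Sym2.mem_mk_left b a')
  simp [hab, hba']

theorem exists_ncard_eq_succ_of_isPath [Finite V] (hAB : Disjoint A B) :
    ∀ {M : Set (Sym2 V)} {a b : V} (p : G.Walk a b), IsMatchingSet G M → p.IsPath →
      (∀ d ∈ p.darts, DMarc G A B M d.fst d.snd) → a ∈ A → a ∉ matVerts M → b ∈ B →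
      b ∉ matVerts M → ∃ N, IsMatchingSet G N ∧ N.ncard = M.ncard + 1
  | _, _, _, .nil, _, _, _, ha, _, hb, _ => (Set.disjoint_left.mp hAB ha hb).elim
  | M, _, _, .cons hab .nil, hM, _, _, _, haM, _, hbM =>
    ⟨_, hM.insert_mk hab haM hbM,
      Set.ncard_insert_of_notMem (fun h => haM ⟨_, h, Sym2.mem_mk_left _ _⟩) M.toFinite⟩
  | M, a, b, .cons (v := b₁) hab₁ (.cons (v := a₁) _ r), hM, hp, hD, ha, haM, hb, hbM => by
    simp only [Walk.darts_cons, List.mem_cons, forall_eq_or_imp] at hD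
    obtain ⟨hab₁D, hb₁a₁D, hrD⟩ := hD
    obtain ⟨hb₁, -⟩ := hab₁D.of_left_mem_A hAB ha
    obtain ⟨ha₁, hb₁a₁⟩ := hb₁a₁D.of_left_mem_B hAB hb₁
    simp only [Walk.cons_isPath_iff, Walk.support_cons, List.mem_cons, not_or] at hp
    obtain ⟨⟨hr, hb₁r⟩, -⟩ := hp
    obtain ⟨hM₂, hcard, ha₁M₂⟩ := hM.exchange hb₁a₁ hab₁ haM
    have hb₁_ne {x : V} (hx : x ∈ r.support) : x ≠ b₁ := fun h => hb₁r (h ▸ hx)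
    have hbM₂ : b ∉ matVerts (insert s(a, b₁) (M \ {s(b₁, a₁)})) := by
      rw [mem_matVerts_insert, Sym2.mem_iff, not_or, not_or]
      exact ⟨⟨fun h => Set.disjoint_left.mp hAB (h ▸ ha) hb, hb₁_ne r.end_mem_support⟩,
        fun h => hbM (matVerts_mono Set.sdiff_subset h)⟩
    have hrD₂ : ∀ d ∈ r.darts, DMarc G A B (insert s(a, b₁) (M \ {s(b₁, a₁)})) d.fst d.snd := by
      intro d hd
      refine (dMarc_iff_of_mem_iff (mem_exchange_iff ?_).symm).mp (hrD d hd)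
      rw [Sym2.mem_iff, not_or]
      exact ⟨(hb₁_ne (r.dart_fst_mem_support_of_mem_darts hd)).symm,
        (hb₁_ne (r.dart_snd_mem_support_of_mem_darts hd)).symm⟩
    obtain ⟨N, hN, hNcard⟩ := exists_ncard_eq_succ_of_isPath hAB r hM₂ hr hrD₂ ha₁ ha₁M₂ hb hbM₂
    exact ⟨N, hN, hcard ▸ hNcard⟩
termination_by _ _ _ p => p.length

end Augmentation

section Cover

variable {G : SimpleGraph V} {A B : Set V} {M : Set (Sym2 V)}

theorem mem_Vplus_of_dMarc {v w : V} (hv : v ∈ Vplus G A B M) (hvw : DMarc G A B M v w) :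
    w ∈ Vplus G A B M :=
  let ⟨a, ha, haM, hav⟩ := hv
  ⟨a, ha, haM, hav.tail hvw⟩

theorem mem_Vplus_iff_of_mem (hbip : IsBipartition G A B) (hM : IsMatchingSet G M) {p q : V}
    (hpq : s(p, q) ∈ M) (hp : p ∈ A) : p ∈ Vplus G A B M ↔ q ∈ Vplus G A B M := by
  have hAB := Set.disjoint_left.mp hbip.1
  have hadj : G.Adj p q := hM.1 hpq
  have hq : q ∈ B := ((hbip.2.2 hadj).resolve_right fun h => hAB hp h.1).2
  refine ⟨fun ⟨a, ha, haM, hap⟩ => ?_,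
    fun hqV => mem_Vplus_of_dMarc hqV ⟨hadj.symm, .inr ⟨hq, hp, Sym2.eq_swap ▸ hpq⟩⟩⟩
  -- `p` is covered, so the path reaches it through its matching edge, i.e. from `q`.
  rcases hap.cases_tail with rfl | ⟨w, haw, hwp⟩
  · exact (haM ⟨_, hpq, Sym2.mem_mk_left p q⟩).elim
  rcases hwp.2 with ⟨-, hpB, -⟩ | ⟨-, -, hwpM⟩
  · exact (hAB hp hpB).elim
  obtain rfl : w = q := by
    rcases Sym2.eq_iff.mp (hM.eq_of_mem hwpM hpq (Sym2.mem_mk_right w p) (Sym2.mem_mk_left p q))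
      with ⟨rfl, rfl⟩ | ⟨rfl, -⟩
    exacts [(hadj.ne rfl).elim, rfl]
  exact ⟨a, ha, haM, haw⟩

variable (G A B M) in
def koenigCover : Set V := (A \ Vplus G A B M) ∪ (B ∩ Vplus G A B M)

theorem mem_koenigCover_of_mem_A (hAB : Disjoint A B) {v : V} (hv : v ∈ A) :
    v ∈ koenigCover G A B M ↔ v ∉ Vplus G A B M := by
  simp [koenigCover, hv, Set.disjoint_left.mp hAB hv]

theorem mem_koenigCover_of_mem_B (hAB : Disjoint A B) {v : V} (hv : v ∈ B) :
    v ∈ koenigCover G A B M ↔ v ∈ Vplus G A B M := by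
  simp [koenigCover, hv, Set.disjoint_right.mp hAB hv]

theorem koenigCover_subset_matVerts
    (hno : ¬ ∃ a ∈ A, a ∉ matVerts M ∧ ∃ b ∈ B, b ∉ matVerts M ∧
      Relation.ReflTransGen (DMarc G A B M) a b) :
    koenigCover G A B M ⊆ matVerts M := by
  rintro v (⟨hv, hvV⟩ | ⟨hv, a, ha, haM, hav⟩) <;> by_contra hvM
  · exact hvV ⟨v, hv, hvM, .refl⟩
  · exact hno ⟨a, ha, haM, v, hv, hvM, hav⟩

theorem isVertexCover_koenigCover (hbip : IsBipartition G A B) (hM : IsMatchingSet G M) :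
    G.IsVertexCover (koenigCover G A B M) := by
  have cover {u v : V} (huv : G.Adj u v) (hu : u ∈ A) (hv : v ∈ B) :
      u ∈ koenigCover G A B M ∨ v ∈ koenigCover G A B M := by
    rw [mem_koenigCover_of_mem_A hbip.1 hu, mem_koenigCover_of_mem_B hbip.1 hv, or_iff_not_imp_left,
      not_not]
    intro huV
    by_cases huvM : s(u, v) ∈ M
    · exact (mem_Vplus_iff_of_mem hbip hM huvM hu).mp huV
    · exact mem_Vplus_of_dMarc huV ⟨huv, .inl ⟨hu, hv, huvM⟩⟩
  intro u v huv
  rcases hbip.2.2 huv with ⟨hu, hv⟩ | ⟨hu, hv⟩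
  exacts [cover huv hu hv, (cover huv.symm hv hu).symm]

theorem notMem_koenigCover_of_mem (hbip : IsBipartition G A B) (hM : IsMatchingSet G M)
    {u v : V} (huv : s(u, v) ∈ M) (hu : u ∈ koenigCover G A B M) : v ∉ koenigCover G A B M := by
  have hvu : s(v, u) ∈ M := Sym2.eq_swap ▸ huv
  rcases hbip.2.2 (hM.1 huv) with ⟨hu', hv'⟩ | ⟨hu', hv'⟩
  · rw [mem_koenigCover_of_mem_A hbip.1 hu', mem_Vplus_iff_of_mem hbip hM huv hu'] at hu
    rwa [mem_koenigCover_of_mem_B hbip.1 hv']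
  · rw [mem_koenigCover_of_mem_B hbip.1 hu', ← mem_Vplus_iff_of_mem hbip hM hvu hv'] at hu
    rwa [mem_koenigCover_of_mem_A hbip.1 hv', not_not]

theorem ncard_koenigCover_le [Finite V] (hbip : IsBipartition G A B) (hM : IsMatchingSet G M)
    (hno : ¬ ∃ a ∈ A, a ∉ matVerts M ∧ ∃ b ∈ B, b ∉ matVerts M ∧
      Relation.ReflTransGen (DMarc G A B M) a b) :
    (koenigCover G A B M).ncard ≤ M.ncard := by
  refine Set.ncard_le_ncard_of_forall_subsingleton (fun v e => v ∈ e) M.toFinite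
    (koenigCover_subset_matVerts hno) fun e he u ⟨hu, hue⟩ v ⟨hv, hve⟩ => ?_
  by_contra huv
  rw [(Sym2.mem_and_mem_iff huv).mp ⟨hue, hve⟩] at he
  exact notMem_koenigCover_of_mem hbip hM he hu hv

end Cover

/-- Kőnig: `M` is maximum iff `D(M)` has no directed path from an uncovered
`A`-vertex to an uncovered `B`-vertex. -/
theorem stmt7 [Fintype V] (G : SimpleGraph V) (A B : Set V) (hbip : IsBipartition G A B)
    (M : Set (Sym2 V)) (hM : IsMatchingSet G M) :
    IsMaximumMatching G M ↔
      ¬ ∃ a ∈ A, a ∉ matVerts M ∧ ∃ b ∈ B, b ∉ matVerts M ∧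
        Relation.ReflTransGen (DMarc G A B M) a b := by
  constructor
  · rintro ⟨-, hmax⟩ ⟨a, ha, haM, b, hb, hbM, hab⟩
    obtain ⟨p, hp, hpD⟩ := exists_isPath_of_reflTransGen (fun _ _ h => h.1) hab
    obtain ⟨N, hN, hcard⟩ := exists_ncard_eq_succ_of_isPath hbip.1 p hM hp hpD ha haM hb hbM
    have := hmax N hN
    omega
  · intro hno
    refine ⟨hM, fun M' hM' => ?_⟩
    calc M'.ncard ≤ (koenigCover G A B M).ncard :=
          hM'.ncard_le_of_isVertexCover (isVertexCover_koenigCover hbip hM)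
      _ ≤ M.ncard := ncard_koenigCover_le hbip hM hno
end
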